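/- Let P ⊂ ℝ^ℓ be a compact convex polytope, v ∈ C^∞(P, ℝ_{>0}), w ∈ C^∞(P, ℝ) with F_{v,w} vanishing on affine-linear functions, and u₀ ∈ S(P,L) a fixed reference potential with w₀ := −Σ_{i,j}(v H^{u₀}_{ij})_{,ij}. Assume: (i) P is (v,w)-uniformly K-stable, i.e. F_{v,w}(f) ≥ λ‖f*‖_{L¹(P)} for some λ > 0 and all f ∈ CV^∞(P); (ii) the weighted Mabuchi energy M_{v,w₀} is bounded below on CV^∞(P) (which holds since u₀ solves the corresponding equation). Then there exist C > 0 and D ∈ ℝ such that M_{v,w}(u) ≥ C‖u*‖_{L¹(P)} + D for all u ∈ S(P,L), where M_{v,w}(u) = F_{v,w}(u) − ∫_P v log det(Hess(u)·Hess(u₀)⁻¹) dx and u* is the normalization of u in CV_*^∞(P). -/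

import Mathlib

open MeasureTheory

/-- Second partial derivative `∂²f/∂x_i∂x_j` in the standard basis. -/
noncomputable def secondPartial {ℓ : ℕ} (f : EuclideanSpace ℝ (Fin ℓ) → ℝ)
    (x : EuclideanSpace ℝ (Fin ℓ)) (i j : Fin ℓ) : ℝ :=
  fderiv ℝ (fun y => fderiv ℝ f y (EuclideanSpace.single j 1)) x (EuclideanSpace.single i 1)

/-- The lattice-normalized boundary measure `dσ` on `∂P` (defined by
`dL_j ∧ dσ = −dx`): on the facet `{L_j = 0}` it is the `(ℓ−1)`-dimensional Hausdorff
measure divided by the Euclidean length of the normal `dL_j`. -/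
noncomputable def bdryMeasure {ℓ k : ℕ} (n : Fin k → Fin ℓ → ℝ) (c : Fin k → ℝ)
    (P : Set (EuclideanSpace ℝ (Fin ℓ))) : Measure (EuclideanSpace ℝ (Fin ℓ)) :=
  ∑ j : Fin k, (ENNReal.ofReal (Real.sqrt (∑ i, (n j i) ^ 2)))⁻¹ •
    (μH[(ℓ : ℝ) - 1]).restrict {x | x ∈ P ∧ (∑ i, n j i * x i) + c j = 0}

/-- The Abreu–Guillemin boundary conditions for a field `H` of symmetric bilinear
forms on the labelled polytope `P = {∀ j, L_j ≥ 0}` with inward normals `u_j = dL_j`: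
on each facet `{L_j = 0}`, `H(u_j, ·) = 0` and `dH(u_j, u_j) = 2 u_j` (derivatives
taken within `P`). -/
def AbreuBoundaryConditions {ℓ k : ℕ} (n : Fin k → Fin ℓ → ℝ) (c : Fin k → ℝ)
    (P : Set (EuclideanSpace ℝ (Fin ℓ)))
    (H : EuclideanSpace ℝ (Fin ℓ) → Matrix (Fin ℓ) (Fin ℓ) ℝ) : Prop :=
  ∀ j : Fin k, ∀ x ∈ P, (∑ i, n j i * x i) + c j = 0 →
    (∀ i', (∑ i, n j i * H x i i') = 0) ∧
    (∀ ξ : EuclideanSpace ℝ (Fin ℓ),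
      fderivWithin ℝ (fun y => ∑ i, ∑ i', n j i * H y i i' * n j i') P x ξ =
        2 * ∑ i, n j i * ξ i)

/-- The Hessian matrix of a function on `ℝ^ℓ`, in the standard basis. -/
noncomputable def hessianMatrix {ℓ : ℕ} (f : EuclideanSpace ℝ (Fin ℓ) → ℝ)
    (x : EuclideanSpace ℝ (Fin ℓ)) : Matrix (Fin ℓ) (Fin ℓ) ℝ :=
  Matrix.of (secondPartial f x)

/-- Membership in `S(P,L)`: `u` is a continuous convex function on `P`, smooth and
strictly convex on `P⁰`, whose inverse Hessian `Hu` extends smoothly to `P` as a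
symmetric field satisfying the Abreu–Guillemin boundary conditions. -/
def IsSymplecticPotential {ℓ k : ℕ} (n : Fin k → Fin ℓ → ℝ) (c : Fin k → ℝ)
    (P : Set (EuclideanSpace ℝ (Fin ℓ)))
    (u : EuclideanSpace ℝ (Fin ℓ) → ℝ)
    (Hu : EuclideanSpace ℝ (Fin ℓ) → Matrix (Fin ℓ) (Fin ℓ) ℝ) : Prop :=
  ContinuousOn u P ∧ ConvexOn ℝ P u ∧ ContDiffOn ℝ (⊤ : ℕ∞) u (interior P) ∧
  (∀ x ∈ interior P, (hessianMatrix u x).PosDef) ∧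
  (∀ i j', ContDiffOn ℝ (⊤ : ℕ∞) (fun x => Hu x i j') P) ∧
  (∀ x ∈ interior P, Hu x = (hessianMatrix u x)⁻¹) ∧
  (∀ x, (Hu x).IsSymm) ∧
  AbreuBoundaryConditions n c P Hu

/-- bounded measurable integrable helper -/
lemma aux_integrableOn_of_bounded {ℓ : ℕ} {s : Set (EuclideanSpace ℝ (Fin ℓ))}
    (hs : MeasurableSet s) (hfin : volume s < ⊤) {f : EuclideanSpace ℝ (Fin ℓ) → ℝ}
    (hf : ContinuousOn f s) {C : ℝ} (hb : ∀ x ∈ s, |f x| ≤ C) :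
    IntegrableOn f s := by
  refine Integrable.mono' (g := fun _ => C) ?_ (hf.aestronglyMeasurable hs) ?_
  · exact integrableOn_const hfin.ne
  · filter_upwards [ae_restrict_mem hs] with x hx
    simpa [Real.norm_eq_abs] using hb x hx

/-- PosDef smul -/
lemma aux_posDef_smul {ℓ : ℕ} {M : Matrix (Fin ℓ) (Fin ℓ) ℝ} (hM : M.PosDef) {c : ℝ}
    (hc : 0 < c) : (c • M).PosDef := by
  constructor
  · have h := hM.1
    unfold Matrix.IsHermitian at h ⊢
    rw [Matrix.conjTranspose_smul, h]
    simp
  · intro x hx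
    have h := mul_pos hc (hM.2 hx)
    convert h using 1
    simp only [Matrix.smul_apply, smul_eq_mul]
    rw [Finsupp.mul_sum]
    refine Finsupp.sum_congr fun i _ => ?_
    rw [Finsupp.mul_sum]
    refine Finsupp.sum_congr fun j _ => ?_
    ring

/-- tangent plane lemma -/
lemma aux_tangent_nonneg {ℓ : ℕ} {P : Set (EuclideanSpace ℝ (Fin ℓ))}
    {u : EuclideanSpace ℝ (Fin ℓ) → ℝ} (hconv : ConvexOn ℝ P u)
    {x₀ : EuclideanSpace ℝ (Fin ℓ)} (hx₀ : x₀ ∈ interior P)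
    (hdiff : DifferentiableAt ℝ u x₀) {x : EuclideanSpace ℝ (Fin ℓ)} (hx : x ∈ P) :
    0 ≤ u x - u x₀ - fderiv ℝ u x₀ (x - x₀) := by
  set d := x - x₀ with hd
  set g : ℝ → EuclideanSpace ℝ (Fin ℓ) := fun t => x₀ + t • d with hg
  have hcurve : HasDerivAt g d 0 := by
    have h1 : HasDerivAt (fun t : ℝ => t • d) ((1:ℝ) • d) 0 := (hasDerivAt_id 0).smul_const d
    have := h1.const_add x₀; rw [one_smul] at this; exact this
  have hgd : HasDerivAt (fun t => u (g t)) (fderiv ℝ u x₀ d) 0 := by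
    have hl : HasFDerivAt u (fderiv ℝ u x₀) (g 0) := by
      simpa [hg] using hdiff.hasFDerivAt
    have := hl.comp_hasDerivAt 0 hcurve
    exact this
  have hP : x₀ ∈ P := interior_subset hx₀
  have hslope : ∀ t ∈ Set.Ioc (0:ℝ) 1, (u (g t) - u (g 0)) / t ≤ u x - u x₀ := by
    intro t ht
    have hmem : g t ∈ P := by
      have : g t = (1 - t) • x₀ + t • x := by
        simp only [hg, hd]; module
      rw [this]
      exact hconv.1 hP hx (by linarith [ht.2]) ht.1.le (by ring)
    have hcvx := hconv.2 hP hx (by linarith [ht.2] : (0:ℝ) ≤ 1 - t) ht.1.le (by ring)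
    have hgt : u (g t) ≤ (1 - t) * u x₀ + t * u x := by
      have : g t = (1 - t) • x₀ + t • x := by simp only [hg, hd]; module
      rw [this]; simpa using hcvx
    have hg0 : g 0 = x₀ := by simp [hg]
    rw [hg0, div_le_iff₀ ht.1]
    nlinarith [ht.1]
  have htend : Filter.Tendsto (fun t => (u (g t) - u (g 0)) / t) (nhdsWithin 0 (Set.Ioi 0))
      (nhds (fderiv ℝ u x₀ d)) := by
    have := hasDerivAt_iff_tendsto_slope.1 hgd
    have h2 := this.mono_left (nhdsWithin_mono 0 (by intro y hy; simp at hy ⊢; exact ne_of_gt hy))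
    refine h2.congr ?_
    intro t; simp [slope_def_field, hg]
  have : fderiv ℝ u x₀ d ≤ u x - u x₀ := by
    refine le_of_tendsto htend ?_
    filter_upwards [Ioc_mem_nhdsGT_of_mem (by norm_num : (0:ℝ) ∈ Set.Ico (0:ℝ) 1)] with t ht
    exact hslope t ht
  linarith

/-- continuous extension of second partials to P -/
lemma aux_secondPartial_ext {ℓ : ℕ} {P : Set (EuclideanSpace ℝ (Fin ℓ))}
    (hconv : Convex ℝ P) (hint : (interior P).Nonempty)
    {F : EuclideanSpace ℝ (Fin ℓ) → ℝ} (hF : ContDiffOn ℝ (⊤ : ℕ∞) F P) (i j : Fin ℓ) :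
    ∃ g : EuclideanSpace ℝ (Fin ℓ) → ℝ, ContinuousOn g P ∧
      ∀ x ∈ interior P, secondPartial F x i j = g x := by
  have hud : UniqueDiffOn ℝ P := uniqueDiffOn_convex hconv hint
  set G1 : EuclideanSpace ℝ (Fin ℓ) → (EuclideanSpace ℝ (Fin ℓ) →L[ℝ] ℝ) :=
    fderivWithin ℝ F P with hG1
  have hG1c : ContDiffOn ℝ (⊤ : ℕ∞) G1 P := hF.fderivWithin hud (by simp)
  set G1j : EuclideanSpace ℝ (Fin ℓ) → ℝ := fun y => G1 y (EuclideanSpace.single j 1) with hG1j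
  have hG1jc : ContDiffOn ℝ (⊤ : ℕ∞) G1j P := hG1c.clm_apply contDiffOn_const
  set G2 := fderivWithin ℝ G1j P with hG2
  have hG2c : ContDiffOn ℝ (⊤ : ℕ∞) G2 P := hG1jc.fderivWithin hud (by simp)
  refine ⟨fun x => G2 x (EuclideanSpace.single i 1), ?_, ?_⟩
  · exact (ContinuousLinearMap.apply ℝ ℝ ((EuclideanSpace.single i 1 : EuclideanSpace ℝ (Fin ℓ)))).continuous.comp_continuousOn hG2c.continuousOn
  · intro x hx
    have hxP : P ∈ nhds x := mem_interior_iff_mem_nhds.1 (by simpa using hx)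
    have hev : (fun y => fderiv ℝ F y (EuclideanSpace.single j 1)) =ᶠ[nhds x] G1j := by
      filter_upwards [isOpen_interior.mem_nhds hx] with y hy
      have : P ∈ nhds y := mem_interior_iff_mem_nhds.1 (by simpa using hy)
      simp [hG1j, hG1, fderivWithin_of_mem_nhds this]
    unfold secondPartial
    rw [hev.fderiv_eq, ← fderivWithin_of_mem_nhds (f := G1j) hxP]

lemma aux_secondPartial_combo {ℓ : ℕ} {s : Set (EuclideanSpace ℝ (Fin ℓ))} (hs : IsOpen s)
    {u : EuclideanSpace ℝ (Fin ℓ) → ℝ} (hu : ContDiffOn ℝ (⊤ : ℕ∞) u s)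
    (L : EuclideanSpace ℝ (Fin ℓ) →L[ℝ] ℝ) (c d e : ℝ)
    {x : EuclideanSpace ℝ (Fin ℓ)} (hx : x ∈ s) (i j : Fin ℓ) :
    secondPartial (fun y => c * u y + (d * L y + e)) x i j = c * secondPartial u x i j := by
  have hdAt : ∀ y ∈ s, DifferentiableAt ℝ u y := fun y hy =>
    (hu.differentiableOn (by simp)).differentiableAt (hs.mem_nhds hy)
  set ej : EuclideanSpace ℝ (Fin ℓ) := EuclideanSpace.single j 1 with hej
  set ei : EuclideanSpace ℝ (Fin ℓ) := EuclideanSpace.single i 1 with hei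
  have hev : (fun y => fderiv ℝ (fun z => c * u z + (d * L z + e)) y ej) =ᶠ[nhds x]
      (fun y => c * fderiv ℝ u y ej + d * L ej) := by
    filter_upwards [hs.mem_nhds hx] with y hy
    have h1 : HasFDerivAt (fun z => c * u z) (c • fderiv ℝ u y) y :=
      ((hdAt y hy).hasFDerivAt).const_mul c
    have h2 : HasFDerivAt (fun z : EuclideanSpace ℝ (Fin ℓ) => d * L z + e) ((d : ℝ) • (L : EuclideanSpace ℝ (Fin ℓ) →L[ℝ] ℝ)) y :=
      (L.hasFDerivAt.const_mul d).add_const e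
    have := (h1.add h2).fderiv
    rw [show (fun z => c * u z + (d * L z + e)) = ((fun z => c * u z) + fun z => d * L z + e) from rfl, this]
    simp [smul_eq_mul]
  have hgc : ContDiffOn ℝ (⊤ : ℕ∞) (fun y => fderiv ℝ u y ej) s :=
    (hu.fderiv_of_isOpen hs (by simp)).clm_apply contDiffOn_const
  have hgd : DifferentiableAt ℝ (fun y => fderiv ℝ u y ej) x :=
    (hgc.differentiableOn (by simp)).differentiableAt (hs.mem_nhds hx)
  have houter : fderiv ℝ (fun y => fderiv ℝ (fun z => c * u z + (d * L z + e)) y ej) x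
      = fderiv ℝ (fun y => c * fderiv ℝ u y ej + d * L ej) x := hev.fderiv_eq
  have h3 : HasFDerivAt (fun y => c * fderiv ℝ u y ej + d * L ej)
      (c • fderiv ℝ (fun y => fderiv ℝ u y ej) x) x :=
    (hgd.hasFDerivAt.const_mul c).add_const _
  unfold secondPartial
  rw [houter, h3.fderiv]
  simp [smul_eq_mul]
  exact Or.inl rfl


set_option maxHeartbeats 2000000 in
/-- Coercivity of the weighted Mabuchi energy under uniform `(v,w)`-K-stability
(Proposition 7.9): assume `F_{v,w}` vanishes on affine-linear functions, `u₀ ∈ S(P,L)`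
is a reference potential with `w₀ = −Σ (v H^{u₀}_{ij})_{,ij}`, `P` is
`(v,w)`-uniformly K-stable (`F_{v,w}(f) ≥ λ ‖f*‖_{L¹(P)}` on `CV^∞(P)`, where `f*` is
the normalization of `f` at the interior point `x₀`), and the weighted Mabuchi energy
`M_{v,w₀}` is bounded below. Then there are `C > 0` and `D ∈ ℝ` with
`M_{v,w}(u) ≥ C ‖u*‖_{L¹(P)} + D` for all `u ∈ S(P,L)`. -/
theorem weighted_mabuchi_coercive_of_uniform_K_stable {ℓ k : ℕ}
    (n : Fin k → Fin ℓ → ℝ) (c : Fin k → ℝ)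
    (P : Set (EuclideanSpace ℝ (Fin ℓ)))
    (hPdef : P = {x | ∀ j, 0 ≤ (∑ i, n j i * x i) + c j})
    (hPc : IsCompact P) (hPint : (interior P).Nonempty)
    (x₀ : EuclideanSpace ℝ (Fin ℓ)) (hx₀ : x₀ ∈ interior P)
    (v w w₀ : EuclideanSpace ℝ (Fin ℓ) → ℝ)
    (hv : ContDiffOn ℝ (⊤ : ℕ∞) v P) (hvpos : ∀ x ∈ P, 0 < v x)
    (hw : ContDiffOn ℝ (⊤ : ℕ∞) w P)
    (hvanish : ∀ a : EuclideanSpace ℝ (Fin ℓ) →ᵃ[ℝ] ℝ,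
      2 * (∫ x, a x * v x ∂(bdryMeasure n c P)) + (∫ x in interior P, a x * w x) = 0)
    (u₀ : EuclideanSpace ℝ (Fin ℓ) → ℝ)
    (Hu₀ : EuclideanSpace ℝ (Fin ℓ) → Matrix (Fin ℓ) (Fin ℓ) ℝ)
    (hu₀ : IsSymplecticPotential n c P u₀ Hu₀)
    (hw₀def : ∀ x ∈ interior P,
      w₀ x = -(∑ i, ∑ j', secondPartial (fun y => v y * Hu₀ y i j') x i j'))
    (lam : ℝ) (hlam : 0 < lam)
    (hstab : ∀ f : EuclideanSpace ℝ (Fin ℓ) → ℝ,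
      ContinuousOn f P → ConvexOn ℝ P f → ContDiffOn ℝ (⊤ : ℕ∞) f (interior P) →
      lam * (∫ x in P, |f x - f x₀ - fderiv ℝ f x₀ (x - x₀)|) ≤
        2 * (∫ x, f x * v x ∂(bdryMeasure n c P)) + ∫ x in interior P, f x * w x)
    (B : ℝ)
    (hMbound : ∀ f : EuclideanSpace ℝ (Fin ℓ) → ℝ,
      ContinuousOn f P → ConvexOn ℝ P f → ContDiffOn ℝ (⊤ : ℕ∞) f (interior P) →
      (∀ x ∈ interior P, (hessianMatrix f x).PosDef) →
      B ≤ 2 * (∫ x, f x * v x ∂(bdryMeasure n c P)) +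
          (∫ x in interior P, f x * w₀ x) -
          ∫ x in interior P,
            v x * Real.log ((hessianMatrix f x * (hessianMatrix u₀ x)⁻¹).det)) :
    ∃ C > (0 : ℝ), ∃ D : ℝ,
      ∀ (u : EuclideanSpace ℝ (Fin ℓ) → ℝ)
        (Hu : EuclideanSpace ℝ (Fin ℓ) → Matrix (Fin ℓ) (Fin ℓ) ℝ),
        IsSymplecticPotential n c P u Hu →
        C * (∫ x in P, |u x - u x₀ - fderiv ℝ u x₀ (x - x₀)|) + D ≤
          2 * (∫ x, u x * v x ∂(bdryMeasure n c P)) +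
            (∫ x in interior P, u x * w x) -
            ∫ x in interior P,
              v x * Real.log ((hessianMatrix u x * (hessianMatrix u₀ x)⁻¹).det) := by
  classical
  obtain ⟨hu₀c, hu₀cv, hu₀cd, hu₀pos, hH₀cd, hH₀inv, hH₀sym, hH₀bc⟩ := hu₀
  have hPconv : Convex ℝ P := hu₀cv.1
  have hPmeas : MeasurableSet P := hPc.isClosed.measurableSet
  have hintmeas : MeasurableSet (interior P) := isOpen_interior.measurableSet
  have hfin : volume (interior P) < ⊤ :=
    lt_of_le_of_lt (measure_mono interior_subset) hPc.measure_lt_top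
  -- a.e. equality of `interior P` and `P`
  have hfr : volume (P \ interior P) = 0 := by
    have h1 : P \ interior P ⊆ frontier P := by
      intro x hx
      exact ⟨subset_closure hx.1, hx.2⟩
    exact measure_mono_null h1 (hPconv.addHaar_frontier volume)
  have hae : (interior P : Set (EuclideanSpace ℝ (Fin ℓ))) =ᵐ[volume] P := by
    rw [MeasureTheory.ae_eq_set]
    constructor
    · have : interior P \ P = ∅ := by
        rw [Set.diff_eq_empty]; exact interior_subset
      simp [this]
    · exact hfr
  -- continuous extension of `w₀` to `P`
  have hFij : ∀ i j' : Fin ℓ, ContDiffOn ℝ (⊤ : ℕ∞) (fun x => v x * Hu₀ x i j') P :=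
    fun i j' => hv.mul (hH₀cd i j')
  have hExt : ∀ i j' : Fin ℓ, ∃ g : EuclideanSpace ℝ (Fin ℓ) → ℝ, ContinuousOn g P ∧
      ∀ x ∈ interior P, secondPartial (fun y => v y * Hu₀ y i j') x i j' = g x :=
    fun i j' => aux_secondPartial_ext hPconv hPint (hFij i j') i j'
  choose gm hgmc hgm using hExt
  set g : EuclideanSpace ℝ (Fin ℓ) → ℝ := fun x => -(∑ i, ∑ j', gm i j' x) with hgdef
  have hgc : ContinuousOn g P := by
    apply ContinuousOn.neg
    apply continuousOn_finset_sum
    intro i _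
    exact continuousOn_finset_sum _ (fun j' _ => hgmc i j')
  have hgw₀ : ∀ x ∈ interior P, w₀ x = g x := by
    intro x hx
    rw [hw₀def x hx, hgdef]
    simp only [neg_inj]
    exact Finset.sum_congr rfl fun i _ => Finset.sum_congr rfl fun j' _ => hgm i j' x hx
  -- bounds
  obtain ⟨W1, hW1⟩ := hPc.exists_bound_of_continuousOn hw.continuousOn
  set Winf : ℝ := max W1 0 with hWdef
  have hWb : ∀ x ∈ P, |w x| ≤ Winf := fun x hx =>
    le_trans (by simpa [Real.norm_eq_abs] using hW1 x hx) (le_max_left _ _)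
  have hW0 : 0 ≤ Winf := le_max_right _ _
  obtain ⟨M1, hM1⟩ := hPc.exists_bound_of_continuousOn (hw.continuousOn.sub hgc)
  set M : ℝ := max M1 0 with hMdef
  have hMb : ∀ x ∈ P, |w x - g x| ≤ M := fun x hx =>
    le_trans (by simpa [Real.norm_eq_abs] using hM1 x hx) (le_max_left _ _)
  have hM0 : 0 ≤ M := le_max_right _ _
  obtain ⟨Kv1, hKv1⟩ := hPc.exists_bound_of_continuousOn hv.continuousOn
  set Kv : ℝ := max Kv1 0 with hKvdef
  have hKvb : ∀ x ∈ P, |v x| ≤ Kv := fun x hx =>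
    le_trans (by simpa [Real.norm_eq_abs] using hKv1 x hx) (le_max_left _ _)
  have hKv0 : 0 ≤ Kv := le_max_right _ _
  obtain ⟨Kg1, hKg1⟩ := hPc.exists_bound_of_continuousOn hgc
  set Kg : ℝ := max Kg1 0 with hKgdef
  have hKgb : ∀ x ∈ P, |g x| ≤ Kg := fun x hx =>
    le_trans (by simpa [Real.norm_eq_abs] using hKg1 x hx) (le_max_left _ _)
  -- the scaling constant
  set Ct : ℝ := lam / (2 * (lam + M + Winf + 1)) with hCtdef
  have hden : (0:ℝ) < lam + M + Winf + 1 := by linarith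
  have hCt0 : 0 < Ct := by
    apply div_pos hlam; linarith
  have hCtval : Ct * (2 * (lam + M + Winf + 1)) = lam := by
    rw [← mul_assoc, mul_assoc Ct, hCtdef]
    exact div_mul_cancel₀ _ (mul_pos two_pos hden).ne'
  have hCtle1 : Ct ≤ 1 := by nlinarith
  have hkey1 : Ct * (lam + M) ≤ lam / 2 := by nlinarith
  have hkey2 : Ct * (Winf + M) ≤ lam / 2 := by nlinarith
  set V : ℝ := ∫ x in interior P, v x with hVdef
  have hV0 : 0 ≤ V := by
    apply MeasureTheory.setIntegral_nonneg hintmeas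
    intro x hx
    exact (hvpos x (interior_subset hx)).le
  have hintv : IntegrableOn v (interior P) := by
    apply aux_integrableOn_of_bounded hintmeas hfin (hv.continuousOn.mono interior_subset)
    exact fun x hx => hKvb x (interior_subset hx)
  refine ⟨lam / 2, by positivity, B + (ℓ:ℝ) * Real.log Ct * V, ?_⟩
  intro u Hu hu
  obtain ⟨huc, hucv, hucd, hupos, -, -, -, -⟩ := hu
  set L := fderiv ℝ u x₀ with hLdef
  set σ := bdryMeasure n c P with hσdef
  set afn : EuclideanSpace ℝ (Fin ℓ) → ℝ := fun x => u x₀ + L (x - x₀) with hafndef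
  set us : EuclideanSpace ℝ (Fin ℓ) → ℝ := fun x => u x - afn x with husdef
  have hafn_cont : Continuous afn := by
    apply Continuous.add continuous_const
    exact L.continuous.comp (continuous_id.sub continuous_const)
  have husc : ContinuousOn us P := huc.sub hafn_cont.continuousOn
  have hx₀P : x₀ ∈ P := interior_subset hx₀
  have hdiffx₀ : DifferentiableAt ℝ u x₀ :=
    ((hucd.differentiableOn (by simp)).differentiableAt (isOpen_interior.mem_nhds hx₀))
  have hus0 : ∀ x ∈ P, 0 ≤ us x := by
    intro x hx
    have := aux_tangent_nonneg hucv hx₀ hdiffx₀ hx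
    simp only [husdef, hafndef]
    rw [← hLdef] at this
    linarith
  -- key integral quantities
  set N : ℝ := ∫ x in P, |u x - u x₀ - L (x - x₀)| with hNdef
  set Ib : ℝ := ∫ x, u x * v x ∂σ with hIbdef
  set Wu : ℝ := ∫ x in interior P, u x * w x with hWudef
  set J : ℝ := ∫ x in interior P,
      v x * Real.log ((hessianMatrix u x * (hessianMatrix u₀ x)⁻¹).det) with hJdef
  have hN0 : 0 ≤ N := MeasureTheory.integral_nonneg fun x => abs_nonneg _
  have hNus : N = ∫ x in interior P, us x := by
    rw [hNdef]
    rw [MeasureTheory.setIntegral_congr_fun hPmeas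
      (g := us) (fun x hx => by
        have h1 : u x - u x₀ - L (x - x₀) = us x := by simp only [husdef, hafndef]; ring
        rw [h1, abs_of_nonneg (hus0 x hx)])]
    exact (MeasureTheory.setIntegral_congr_set hae).symm
  -- stability applied to u
  have hG : lam * N ≤ 2 * Ib + Wu := by
    have h := hstab u huc hucv hucd
    rw [← hLdef] at h
    rw [← hNdef, ← hIbdef, ← hWudef] at h
    exact h
  -- bounds for us on P
  obtain ⟨Ku1, hKu1⟩ := hPc.exists_bound_of_continuousOn husc
  set Ku : ℝ := max Ku1 0 with hKudef
  have hKub : ∀ x ∈ P, |us x| ≤ Ku := fun x hx =>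
    le_trans (by simpa [Real.norm_eq_abs] using hKu1 x hx) (le_max_left _ _)
  have hKu0 : 0 ≤ Ku := le_max_right _ _
  obtain ⟨Ka1, hKa1⟩ := hPc.exists_bound_of_continuousOn hafn_cont.continuousOn
  set Ka : ℝ := max Ka1 0 with hKadef
  have hKab : ∀ x ∈ P, |afn x| ≤ Ka := fun x hx =>
    le_trans (by simpa [Real.norm_eq_abs] using hKa1 x hx) (le_max_left _ _)
  have hKa0 : 0 ≤ Ka := le_max_right _ _
  -- integrability on interior P
  have habs_mul : ∀ (F G : EuclideanSpace ℝ (Fin ℓ) → ℝ) (CF CG : ℝ),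
      (∀ x ∈ P, |F x| ≤ CF) → (∀ x ∈ P, |G x| ≤ CG) → (0 ≤ CF) → (0 ≤ CG) →
      ∀ x ∈ interior P, |F x * G x| ≤ CF * CG := by
    intro F G CF CG hF hG hCF hCG x hx
    have hxP := interior_subset hx
    rw [abs_mul]
    exact mul_le_mul (hF x hxP) (hG x hxP) (abs_nonneg _) hCF
  have hint_us_w : IntegrableOn (fun x => us x * w x) (interior P) :=
    aux_integrableOn_of_bounded hintmeas hfin
      ((husc.mono interior_subset).mul (hw.continuousOn.mono interior_subset))
      (habs_mul us w Ku Winf hKub hWb hKu0 hW0)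
  have hint_afn_w : IntegrableOn (fun x => afn x * w x) (interior P) :=
    aux_integrableOn_of_bounded hintmeas hfin
      ((hafn_cont.continuousOn.mono interior_subset).mul (hw.continuousOn.mono interior_subset))
      (habs_mul afn w Ka Winf hKab hWb hKa0 hW0)
  have hint_us_g : IntegrableOn (fun x => us x * g x) (interior P) :=
    aux_integrableOn_of_bounded hintmeas hfin
      ((husc.mono interior_subset).mul (hgc.mono interior_subset))
      (habs_mul us g Ku Kg hKub hKgb hKu0 (le_max_right _ _))
  have hint_afn_g : IntegrableOn (fun x => afn x * g x) (interior P) :=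
    aux_integrableOn_of_bounded hintmeas hfin
      ((hafn_cont.continuousOn.mono interior_subset).mul (hgc.mono interior_subset))
      (habs_mul afn g Ka Kg hKab hKgb hKa0 (le_max_right _ _))
  have hint_us : IntegrableOn us (interior P) :=
    aux_integrableOn_of_bounded hintmeas hfin (husc.mono interior_subset)
      (fun x hx => hKub x (interior_subset hx))
  have haemem : ∀ᵐ x ∂(volume.restrict (interior P)), x ∈ interior P :=
    MeasureTheory.ae_restrict_mem hintmeas
  have haew₀ : (fun x => w₀ x) =ᵐ[volume.restrict (interior P)] g := by
    filter_upwards [haemem] with x hx using hgw₀ x hx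
  have hint_us_w₀ : IntegrableOn (fun x => us x * w₀ x) (interior P) := by
    apply hint_us_g.congr
    filter_upwards [haemem] with x hx
    rw [hgw₀ x hx]
  have hint_afn_w₀ : IntegrableOn (fun x => afn x * w₀ x) (interior P) := by
    apply hint_afn_g.congr
    filter_upwards [haemem] with x hx
    rw [hgw₀ x hx]
  set Ws : ℝ := ∫ x in interior P, us x * w x with hWsdef
  set Ws₀ : ℝ := ∫ x in interior P, us x * w₀ x with hWs₀def
  set Ta : ℝ := ∫ x in interior P, afn x * w₀ x with hTadef
  -- (5)  Ws₀ ≤ Ws + M * N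
  have h5 : Ws₀ ≤ Ws + M * N := by
    have hmono : Ws₀ ≤ ∫ x in interior P, (us x * w x + M * us x) := by
      apply MeasureTheory.setIntegral_mono_on hint_us_w₀ (hint_us_w.add (hint_us.const_mul M))
        hintmeas
      intro x hx
      have hxP := interior_subset hx
      have h1 := hus0 x hxP
      have h2 := abs_le.1 (hMb x hxP)
      rw [hgw₀ x hx]
      simp only [Pi.add_apply]
      nlinarith [mul_le_mul_of_nonneg_left (show g x - w x ≤ M by linarith [h2.1]) h1]
    rw [MeasureTheory.integral_add hint_us_w (hint_us.const_mul M),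
      MeasureTheory.integral_const_mul] at hmono
    rw [hNus]
    exact hmono
  -- (7)  Ws ≤ Winf * N
  have h7 : Ws ≤ Winf * N := by
    have hmono : Ws ≤ ∫ x in interior P, Winf * us x := by
      apply MeasureTheory.setIntegral_mono_on hint_us_w (hint_us.const_mul Winf) hintmeas
      intro x hx
      have hxP := interior_subset hx
      have h1 := hus0 x hxP
      have h2 := abs_le.1 (hWb x hxP)
      nlinarith [mul_le_mul_of_nonneg_left h2.2 h1]
    rw [MeasureTheory.integral_const_mul] at hmono
    rw [hNus]
    exact hmono
  -- the key family of test functions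
  have hMb' : ∀ t : ℝ, B + J + (ℓ:ℝ) * Real.log Ct * V ≤
      2 * (∫ x, (Ct * us x + t * afn x) * v x ∂σ) + (Ct * Ws₀ + t * Ta) := by
    intro t
    set f : EuclideanSpace ℝ (Fin ℓ) → ℝ := fun y => Ct * us y + t * afn y with hfdef
    have hfrep : f = fun y => Ct * u y + ((t - Ct) * (L y) + (t - Ct) * (u x₀ - L x₀)) := by
      funext y
      simp only [hfdef, husdef, hafndef, map_sub]
      ring
    have hfc : ContinuousOn f P := by
      rw [hfrep]
      exact (continuousOn_const.mul huc).add
        ((continuousOn_const.mul L.continuous.continuousOn).add continuousOn_const)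
    have hfcd : ContDiffOn ℝ (⊤ : ℕ∞) f (interior P) := by
      rw [hfrep]
      exact (contDiffOn_const.mul hucd).add
        ((contDiffOn_const.mul (L.contDiff.contDiffOn)).add contDiffOn_const)
    have haffcvx : ConvexOn ℝ P (fun y => (t - Ct) * (L y) + (t - Ct) * (u x₀ - L x₀)) := by
      refine ⟨hPconv, ?_⟩
      intro x hx y hy a b ha hb hab
      simp only [smul_eq_mul, ContinuousLinearMap.map_add, ContinuousLinearMap.map_smul]
      apply le_of_eq
      linear_combination (-((t - Ct) * (u x₀ - L x₀))) * hab
    have hfcvx : ConvexOn ℝ P f := by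
      rw [hfrep]
      have h1 : ConvexOn ℝ P (fun y => Ct * u y) := hucv.smul hCt0.le
      exact h1.add haffcvx
    have hhess : ∀ x ∈ interior P, hessianMatrix f x = Ct • hessianMatrix u x := by
      intro x hx
      ext i j
      have := aux_secondPartial_combo isOpen_interior hucd L Ct (t - Ct)
        ((t - Ct) * (u x₀ - L x₀)) hx i j
      simp only [hessianMatrix, Matrix.smul_apply, Matrix.of_apply, smul_eq_mul]
      rw [hfrep]
      exact this
    have hfpos : ∀ x ∈ interior P, (hessianMatrix f x).PosDef := by
      intro x hx
      rw [hhess x hx]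
      exact aux_posDef_smul (hupos x hx) hCt0
    have hMB := hMbound f hfc hfcvx hfcd hfpos
    -- rewrite the w₀ term
    have hw₀term : (∫ x in interior P, f x * w₀ x) = Ct * Ws₀ + t * Ta := by
      have h1 : (fun x => f x * w₀ x)
          = fun x => Ct * (us x * w₀ x) + t * (afn x * w₀ x) := by
        funext x; simp only [hfdef]; ring
      rw [h1, MeasureTheory.integral_add (hint_us_w₀.const_mul Ct) (hint_afn_w₀.const_mul t),
        MeasureTheory.integral_const_mul, MeasureTheory.integral_const_mul]
    -- determinant identity
    have hdetpos : ∀ x ∈ interior P,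
        0 < (hessianMatrix u x * (hessianMatrix u₀ x)⁻¹).det := by
      intro x hx
      rw [Matrix.det_mul, Matrix.det_nonsing_inv, Ring.inverse_eq_inv']
      exact mul_pos (hupos x hx).det_pos (inv_pos.2 (hu₀pos x hx).det_pos)
    have hlogeq : ∀ x ∈ interior P,
        v x * Real.log ((hessianMatrix f x * (hessianMatrix u₀ x)⁻¹).det)
        = (ℓ:ℝ) * Real.log Ct * v x
          + v x * Real.log ((hessianMatrix u x * (hessianMatrix u₀ x)⁻¹).det) := by
      intro x hx
      rw [hhess x hx, Matrix.smul_mul, Matrix.det_smul]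
      rw [Real.log_mul (by positivity) (ne_of_gt (hdetpos x hx))]
      rw [Real.log_pow]
      simp only [Fintype.card_fin]
      ring
    have hJf : J + (ℓ:ℝ) * Real.log Ct * V ≤
        ∫ x in interior P, v x * Real.log ((hessianMatrix f x * (hessianMatrix u₀ x)⁻¹).det) := by
      by_cases hintJ : IntegrableOn
          (fun x => v x * Real.log ((hessianMatrix u x * (hessianMatrix u₀ x)⁻¹).det))
          (interior P)
      · have heq : (∫ x in interior P,
            v x * Real.log ((hessianMatrix f x * (hessianMatrix u₀ x)⁻¹).det))
            = (ℓ:ℝ) * Real.log Ct * V + J := by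
          rw [MeasureTheory.setIntegral_congr_fun hintmeas (fun x hx => hlogeq x hx)]
          rw [MeasureTheory.integral_add (hintv.const_mul _) hintJ,
            MeasureTheory.integral_const_mul]
        rw [heq]; linarith
      · have hJ0 : J = 0 := MeasureTheory.integral_undef hintJ
        have hJf0 : (∫ x in interior P,
            v x * Real.log ((hessianMatrix f x * (hessianMatrix u₀ x)⁻¹).det)) = 0 := by
          apply MeasureTheory.integral_undef
          intro hcon
          apply hintJ
          have hcon2 : IntegrableOn (fun x => (ℓ:ℝ) * Real.log Ct * v x
              + v x * Real.log ((hessianMatrix u x * (hessianMatrix u₀ x)⁻¹).det))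
              (interior P) := by
            apply hcon.congr
            filter_upwards [haemem] with x hx
            exact hlogeq x hx
          have := hcon2.sub (hintv.const_mul ((ℓ:ℝ) * Real.log Ct))
          apply this.congr
          filter_upwards with x
          simp only [Pi.sub_apply]
          ring
        rw [hJf0, hJ0]
        have hlog : Real.log Ct ≤ 0 := Real.log_nonpos hCt0.le hCtle1
        have : (ℓ:ℝ) * Real.log Ct * V ≤ 0 := by
          apply mul_nonpos_of_nonpos_of_nonneg _ hV0
          exact mul_nonpos_of_nonneg_of_nonpos (by positivity) hlog
        linarith
    have hbdrw : (fun x => f x * v x) = fun x => (Ct * us x + t * afn x) * v x := by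
      funext x; simp only [hfdef]
    rw [hw₀term, hbdrw] at hMB
    linarith [hJf]
  -- main case split
  by_cases hints : Integrable (fun x => us x * v x) σ ∧ Integrable (fun x => afn x * v x) σ
  · -- both boundary integrands integrable: the standard argument
    obtain ⟨hbi1, hbi2⟩ := hints
    set Is : ℝ := ∫ x, us x * v x ∂σ with hIsdef
    set Ia : ℝ := ∫ x, afn x * v x ∂σ with hIadef
    have hIb : Ib = Is + Ia := by
      rw [hIbdef]
      have h1 : (fun x => u x * v x) = fun x => us x * v x + afn x * v x := by
        funext x; simp only [husdef]; ring
      rw [h1, MeasureTheory.integral_add hbi1 hbi2]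
    set Wa : ℝ := ∫ x in interior P, afn x * w x with hWadef
    have hWu : Wu = Ws + Wa := by
      rw [hWudef]
      have h1 : (fun x => u x * w x) = fun x => us x * w x + afn x * w x := by
        funext x; simp only [husdef]; ring
      rw [h1, MeasureTheory.integral_add hint_us_w hint_afn_w]
    -- the vanishing hypothesis applied to the affine map afn
    have hvan : 2 * Ia + Wa = 0 := by
      set A : EuclideanSpace ℝ (Fin ℓ) →ᵃ[ℝ] ℝ :=
        L.toLinearMap.toAffineMap + AffineMap.const ℝ (EuclideanSpace ℝ (Fin ℓ)) (u x₀ - L x₀)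
        with hAdef
      have hA : ∀ x, A x = afn x := by
        intro x
        simp only [hAdef, AffineMap.coe_add, Pi.add_apply, LinearMap.coe_toAffineMap,
          ContinuousLinearMap.coe_coe, AffineMap.coe_const, Function.const_apply,
          hafndef, map_sub]
        ring
      have := hvanish A
      have e1 : (fun x => A x * v x) = fun x => afn x * v x := funext fun x => by rw [hA]
      have e2 : (fun x => A x * w x) = fun x => afn x * w x := funext fun x => by rw [hA]
      rw [e1, e2] at this
      rw [hIadef, hWadef]
      exact this
    have hMB0 := hMb' 0
    have hbdry0 : (∫ x, (Ct * us x + 0 * afn x) * v x ∂σ) = Ct * Is := by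
      have h1 : (fun x => (Ct * us x + 0 * afn x) * v x) = fun x => Ct * (us x * v x) := by
        funext x; ring
      rw [h1, MeasureTheory.integral_const_mul]
    rw [hbdry0] at hMB0
    -- assemble
    have hGe : lam * N ≤ 2 * Is + Ws := by
      rw [hIb, hWu] at hG; linarith [hvan]
    have hple : 0 ≤ 1 - Ct := by linarith
    linarith [mul_le_mul_of_nonneg_left hGe hple, mul_le_mul_of_nonneg_left h5 hCt0.le,
      mul_le_mul_of_nonneg_right hkey1 hN0, hN0, hMB0, hIb.ge, hIb.le, hWu.ge, hWu.le, hvan]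
  · -- degenerate boundary case
    have hsub : ∀ t1 t2 : ℝ, t1 ≠ t2 →
        Integrable (fun x => (Ct * us x + t1 * afn x) * v x) σ →
        Integrable (fun x => (Ct * us x + t2 * afn x) * v x) σ → False := by
      intro t1 t2 hne hF1 hF2
      have hg2 : Integrable (fun x => afn x * v x) σ := by
        have hd := hF1.sub hF2
        have hd2 : Integrable (fun x => (t1 - t2) * (afn x * v x)) σ := by
          apply hd.congr
          filter_upwards with x
          simp only [Pi.sub_apply]
          ring
        have := hd2.const_mul (t1 - t2)⁻¹
        apply this.congr
        filter_upwards with x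
        field_simp [sub_ne_zero.2 hne]
      have hg1 : Integrable (fun x => us x * v x) σ := by
        have hd := hF1.sub (hg2.const_mul t1)
        have hd2 : Integrable (fun x => Ct * (us x * v x)) σ := by
          apply hd.congr
          filter_upwards with x
          simp only [Pi.sub_apply]
          ring
        have := hd2.const_mul Ct⁻¹
        apply this.congr
        filter_upwards with x
        field_simp
      exact hints ⟨hg1, hg2⟩
    set K : ℝ := B + J + (ℓ:ℝ) * Real.log Ct * V - Ct * Ws₀ with hKdef
    have hKle : K ≤ 0 := by
      set s : ℝ := if Ta = 0 then 1 else -(|K| + 1) / Ta with hsdef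
      have hs0 : s ≠ 0 := by
        rw [hsdef]
        split_ifs with h
        · norm_num
        · apply div_ne_zero _ h
          intro hc
          rw [neg_eq_zero] at hc
          have := abs_nonneg K
          linarith
      have hsne : s ≠ 2 * s := fun h => hs0 (by linarith)
      have hpick : ∃ t, (t = s ∨ t = 2 * s) ∧
          ¬ Integrable (fun x => (Ct * us x + t * afn x) * v x) σ := by
        by_cases h1 : Integrable (fun x => (Ct * us x + s * afn x) * v x) σ
        · refine ⟨2 * s, Or.inr rfl, fun h2 => hsub s (2 * s) hsne h1 h2⟩
        · exact ⟨s, Or.inl rfl, h1⟩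
      obtain ⟨t, htmem, htint⟩ := hpick
      have hzero : (∫ x, (Ct * us x + t * afn x) * v x ∂σ) = 0 :=
        MeasureTheory.integral_undef htint
      have hM := hMb' t
      rw [hzero] at hM
      have hKt : K ≤ t * Ta := by rw [hKdef]; linarith [hM]
      by_cases hTa : Ta = 0
      · rcases htmem with rfl | rfl <;> simpa [hTa] using hKt
      · have hsval : s * Ta = -(|K| + 1) := by
          rw [hsdef, if_neg hTa]
          field_simp
        have htTa : t * Ta ≤ -(|K| + 1) := by
          rcases htmem with rfl | rfl
          · rw [hsval]
          · rw [mul_assoc, hsval]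
            linarith [abs_nonneg K]
        nlinarith [abs_nonneg K, neg_abs_le K, hKt]
    -- assemble
    linarith [mul_le_mul_of_nonneg_left h5 hCt0.le, mul_le_mul_of_nonneg_left h7 hCt0.le,
      mul_le_mul_of_nonneg_right hkey2 hN0, hN0, hKle, hG]
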